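/- arXiv:2604.17332 — 4 statements merged into one kernel-verified Lean document; each statement's English description precedes it below -/
import Mathlib

section
/- The sequence d ↦ C(k,d)·C(n-k,d), for d = 0,...,min(k,n-k), is unimodal: there exists an index m such that the sequence is nondecreasing on {0,...,m} and nonincreasing on {m,...,min(k,n-k)}. -/
/-!
Writing `f d = C(a,d) C(b,d)`, consecutive terms satisfy
`f (d+1) (d+1)^2 = f d (a-d)(b-d)`, so `f` increases exactly while `(d+1)^2 ≤ (a-d)(b-d)`.
The left side grows and the right side shrinks with `d`, so this condition holds on an initial
segment of `ℕ`, and `f` is unimodal with its peak at the end of that segment.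
-/

theorem Nat.exists_monotoneOn_Iic_antitoneOn_Icc_of_antitone {α : Type*} [Preorder α]
    {f : ℕ → α} {P : ℕ → Prop} (hP : Antitone P) (hup : ∀ d, P d → f d ≤ f (d + 1))
    (hdown : ∀ d, ¬ P d → f (d + 1) ≤ f d) (D : ℕ) :
    ∃ m ≤ D, MonotoneOn f (Set.Iic m) ∧ AntitoneOn f (Set.Icc m D) := by
  classical
  have hpeak : ∃ d, D ≤ d ∨ ¬ P d := ⟨D, Or.inl le_rfl⟩
  refine ⟨Nat.find hpeak, Nat.find_min' hpeak (Or.inl le_rfl), ?_, ?_⟩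
  · refine monotoneOn_of_le_succ Set.ordConnected_Iic fun d _ _ hd => ?_
    rw [Order.succ_eq_add_one] at hd ⊢
    have hd : d < Nat.find hpeak := hd
    exact hup d (of_not_not (not_or.mp (Nat.find_min hpeak hd)).2)
  · refine antitoneOn_of_succ_le Set.ordConnected_Icc fun d _ hd hd' => ?_
    rw [Order.succ_eq_add_one] at hd' ⊢
    refine hdown d fun hPd => ?_
    rcases Nat.find_spec hpeak with hm | hm
    · have := hd.1; have := hd'.2; omega
    · exact hm (hP hd.1 hPd)

theorem Nat.choose_succ_mul_choose_succ_mul_sq (a b d : ℕ) :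
    a.choose (d + 1) * b.choose (d + 1) * (d + 1) ^ 2
      = a.choose d * b.choose d * ((a - d) * (b - d)) := by
  calc a.choose (d + 1) * b.choose (d + 1) * (d + 1) ^ 2
      = a.choose (d + 1) * (d + 1) * (b.choose (d + 1) * (d + 1)) := by ring
    _ = a.choose d * (a - d) * (b.choose d * (b - d)) := by
      rw [Nat.choose_succ_right_eq, Nat.choose_succ_right_eq]
    _ = a.choose d * b.choose d * ((a - d) * (b - d)) := by ring

theorem Nat.antitone_sq_succ_le_sub_mul_sub (a b : ℕ) :
    Antitone fun d => (d + 1) ^ 2 ≤ (a - d) * (b - d) := by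
  intro d e hde h
  calc (d + 1) ^ 2 ≤ (e + 1) ^ 2 := by gcongr
    _ ≤ (a - e) * (b - e) := h
    _ ≤ (a - d) * (b - d) := by gcongr

theorem shell_unimodal_general (n k : ℕ) :
    ∃ m ≤ min k (n - k),
      (∀ d₁ d₂, d₁ ≤ d₂ → d₂ ≤ m →
        Nat.choose k d₁ * Nat.choose (n - k) d₁ ≤ Nat.choose k d₂ * Nat.choose (n - k) d₂)
      ∧ (∀ d₁ d₂, m ≤ d₁ → d₁ ≤ d₂ → d₂ ≤ min k (n - k) →
        Nat.choose k d₂ * Nat.choose (n - k) d₂ ≤ Nat.choose k d₁ * Nat.choose (n - k) d₁) := by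
  set f : ℕ → ℕ := fun d => k.choose d * (n - k).choose d
  have hstep (d : ℕ) : f (d + 1) * (d + 1) ^ 2 = f d * ((k - d) * (n - k - d)) :=
    Nat.choose_succ_mul_choose_succ_mul_sq k (n - k) d
  have hsq (d : ℕ) : 0 < (d + 1) ^ 2 := by positivity
  obtain ⟨m, hmD, hmono, hanti⟩ :=
    Nat.exists_monotoneOn_Iic_antitoneOn_Icc_of_antitone (f := f)
      (Nat.antitone_sq_succ_le_sub_mul_sub k (n - k))
      (fun d h => Nat.le_of_mul_le_mul_right ((hstep d).trans_ge (Nat.mul_le_mul_left _ h))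
        (hsq d))
      (fun d h => Nat.le_of_mul_le_mul_right
        ((hstep d).trans_le (Nat.mul_le_mul_left _ (le_of_not_ge h))) (hsq d))
      (min k (n - k))
  exact ⟨m, hmD, fun d₁ d₂ h₁₂ h₂ => hmono (h₁₂.trans h₂) h₂ h₁₂,
    fun d₁ d₂ h₁ h₁₂ h₂ => hanti ⟨h₁, h₁₂.trans h₂⟩ ⟨h₁.trans h₁₂, h₂⟩ h₁₂⟩

theorem shell_unimodal (n k : ℕ) (hk1 : 1 ≤ k) (hk2 : k ≤ n - 1) :
    ∃ m ≤ min k (n - k),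
      (∀ d₁ d₂, d₁ ≤ d₂ → d₂ ≤ m →
        Nat.choose k d₁ * Nat.choose (n - k) d₁ ≤ Nat.choose k d₂ * Nat.choose (n - k) d₂)
      ∧ (∀ d₁ d₂, m ≤ d₁ → d₁ ≤ d₂ → d₂ ≤ min k (n - k) →
        Nat.choose k d₂ * Nat.choose (n - k) d₂ ≤ Nat.choose k d₁ * Nat.choose (n - k) d₁) :=
  shell_unimodal_general n k
end

section
/- The sign of |Ω_{d+1}| - |Ω_d| equals the sign of the linear expression -(n+2)d + k(n-k) - 1; in particular |Ω_{d+1}| > |Ω_d| if and only if d < (k(n-k)-1)/(n+2), and |Ω_{d+1}| < |Ω_d| if and only if d > (k(n-k)-1)/(n+2). -/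
/-!
Since `C(a, d + 1) * (d + 1) = C(a, d) * (a - d)`, the ratio `|Ω_{d+1}| / |Ω_d|` equals
`(k - d) (n - k - d) / (d + 1)²`, and `(k - d) (n - k - d) - (d + 1)² = k (n - k) - (n + 2) d - 1`.
-/

namespace Nat

theorem choose_succ_mul_choose_succ_mul_sq_s3 (a b d : ℕ) :
    a.choose (d + 1) * b.choose (d + 1) * (d + 1) ^ 2 =
      a.choose d * b.choose d * ((a - d) * (b - d)) := by
  calc _ = a.choose (d + 1) * (d + 1) * (b.choose (d + 1) * (d + 1)) := by ring
    _ = _ := by rw [choose_succ_right_eq, choose_succ_right_eq]; ring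

theorem sign_choose_succ_mul_choose_succ_sub {a b d : ℕ} (ha : d ≤ a) (hb : d ≤ b) :
    SignType.sign ((a.choose (d + 1) * b.choose (d + 1) : ℤ) - a.choose d * b.choose d) =
      SignType.sign ((a : ℤ) * b - (a + b + 2) * d - 1) := by
  have hpos : (0 : ℤ) < a.choose d * b.choose d := by
    have := choose_pos ha; have := choose_pos hb; positivity
  have key : ((a.choose (d + 1) * b.choose (d + 1) : ℤ) - a.choose d * b.choose d) * (d + 1) ^ 2
      = a.choose d * b.choose d * ((a : ℤ) * b - (a + b + 2) * d - 1) := by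
    have h := congrArg (Nat.cast : ℕ → ℤ) (choose_succ_mul_choose_succ_mul_sq_s3 a b d)
    push_cast [Nat.cast_sub ha, Nat.cast_sub hb] at h
    linear_combination h
  have hsign := congrArg SignType.sign key
  rwa [sign_mul, sign_mul, sign_pos hpos, sign_pos (by positivity : (0 : ℤ) < (d + 1) ^ 2),
    mul_one, one_mul] at hsign

end Nat

theorem shell_sign_general (n k d : ℕ)
    (hd : d < min k (n - k)) :
    (Nat.choose k d * Nat.choose (n - k) d
        < Nat.choose k (d + 1) * Nat.choose (n - k) (d + 1)
      ↔ (d : ℚ) < ((k : ℚ) * ((n : ℚ) - k) - 1) / ((n : ℚ) + 2))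
    ∧ (Nat.choose k (d + 1) * Nat.choose (n - k) (d + 1)
        < Nat.choose k d * Nat.choose (n - k) d
      ↔ ((k : ℚ) * ((n : ℚ) - k) - 1) / ((n : ℚ) + 2) < (d : ℚ)) := by
  have hkn : k ≤ n := by omega
  have hsign := Nat.sign_choose_succ_mul_choose_succ_sub (a := k) (b := n - k) (d := d)
    (by omega) (by omega)
  set L : ℤ := (k : ℤ) * (n - k : ℕ) - (k + (n - k : ℕ) + 2) * d - 1
  have hL : (L : ℚ) = k * (n - k) - 1 - (n + 2) * d := by
    push_cast [L, Nat.cast_sub hkn]; ring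
  have hn2 : (0 : ℚ) < n + 2 := by positivity
  constructor
  · rw [lt_div_iff₀ hn2, ← Nat.cast_lt (α := ℤ), ← sub_pos, ← sign_eq_one_iff]
    push_cast
    rw [hsign, sign_eq_one_iff, ← Int.cast_pos (R := ℚ), hL]
    constructor <;> intro <;> linarith
  · rw [div_lt_iff₀ hn2, ← Nat.cast_lt (α := ℤ), ← sub_neg, ← sign_eq_neg_one_iff]
    push_cast
    rw [hsign, sign_eq_neg_one_iff, ← Int.cast_lt_zero (R := ℚ), hL]
    constructor <;> intro <;> linarith

theorem shell_sign (n k d : ℕ) (hk1 : 1 ≤ k) (hk2 : k ≤ n - 1)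
    (hd : d < min k (n - k)) :
    (Nat.choose k d * Nat.choose (n - k) d
        < Nat.choose k (d + 1) * Nat.choose (n - k) (d + 1)
      ↔ (d : ℚ) < ((k : ℚ) * ((n : ℚ) - k) - 1) / ((n : ℚ) + 2))
    ∧ (Nat.choose k (d + 1) * Nat.choose (n - k) (d + 1)
        < Nat.choose k d * Nat.choose (n - k) d
      ↔ ((k : ℚ) * ((n : ℚ) - k) - 1) / ((n : ℚ) + 2) < (d : ℚ)) :=
  shell_sign_general n k d hd
end

section
/- Let h: {0,...,d_max} → ℚ satisfy h_0 = 0, h_i = 1 + p_i h_{i+1} + q_i h_{i-1} + r_i h_i for 1 ≤ i ≤ d_max - 1, and h_{d_max} = 1 + q_{d_max} h_{d_max - 1} + r_{d_max} h_{d_max} (where r_i = 1 - p_i - q_i and p_{d_max} = 0). Then h_m = Σ_{i=1}^{m} (1/(q_i |Ω_i|)) Σ_{j=i}^{d_max} |Ω_j| for all 0 ≤ m ≤ d_max. -/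
theorem hitting_time_formula (n k : ℕ) (hk1 : 1 ≤ k) (hk2 : k ≤ n - 1)
    (hnk : (n, k) ≠ (2, 1)) (h : ℕ → ℚ)
    (p : ℕ → ℚ) (q : ℕ → ℚ) (r : ℕ → ℚ) (Ω : ℕ → ℚ)
    (hp : ∀ d, p d = ((k : ℚ) - d) * ((n : ℚ) - k - d) / ((k : ℚ) * ((n : ℚ) - k)))
    (hq : ∀ d, q d = (d : ℚ) ^ 2 / ((k : ℚ) * ((n : ℚ) - k)))
    (hr : ∀ d, r d = 1 - p d - q d)
    (hΩ : ∀ d, Ω d = (Nat.choose k d * Nat.choose (n - k) d : ℚ))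
    (h0 : h 0 = 0)
    (hrec : ∀ i, 1 ≤ i → i ≤ min k (n - k) - 1 →
      h i = 1 + p i * h (i + 1) + q i * h (i - 1) + r i * h i)
    (hbd : h (min k (n - k))
      = 1 + q (min k (n - k)) * h (min k (n - k) - 1)
          + r (min k (n - k)) * h (min k (n - k))) :
    ∀ m ≤ min k (n - k),
      h m = ∑ i ∈ Finset.Icc 1 m,
        (1 / (q i * Ω i)) * ∑ j ∈ Finset.Icc i (min k (n - k)), Ω j := by
  have hn : k + 1 ≤ n := by omega
  set d := min k (n - k) with hd
  have hd1 : 1 ≤ d := by omega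
  have hKpos : (0:ℚ) < k := by exact_mod_cast hk1
  have hn' : (k:ℚ) + 1 ≤ n := by exact_mod_cast hn
  have hMpos : (0:ℚ) < (n:ℚ) - k := by linarith
  have hKM : (k:ℚ) * ((n:ℚ) - k) ≠ 0 := ne_of_gt (mul_pos hKpos hMpos)
  have hcast : ((n - k : ℕ) : ℚ) = (n:ℚ) - k := by
    push_cast [Nat.cast_sub (by omega : k ≤ n)]; ring
  have hqpos : ∀ i : ℕ, 1 ≤ i → 0 < q i := by
    intro i hi
    rw [hq]
    apply div_pos _ (mul_pos hKpos hMpos)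
    have : (0:ℚ) < i := by exact_mod_cast hi
    positivity
  have hΩpos : ∀ i : ℕ, i ≤ d → 0 < Ω i := by
    intro i hi
    rw [hΩ]
    exact_mod_cast Nat.mul_pos (Nat.choose_pos (by omega)) (Nat.choose_pos (by omega))
  have hpd0 : p d = 0 := by
    rw [hp]
    have hnum : ((k:ℚ) - d) * ((n:ℚ) - k - d) = 0 := by
      rcases le_or_gt k (n - k) with hc | hc
      · have hdk : d = k := by omega
        rw [hdk]; ring
      · have hdk : d = n - k := by omega
        rw [hdk, hcast]; ring
    rw [hnum, zero_div]
  have hpq : ∀ i : ℕ, i + 1 ≤ d → p i * Ω i = q (i+1) * Ω (i+1) := by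
    intro i hi
    have hik : i < k := by omega
    have him : i < n - k := by omega
    have e1 : (Nat.choose k (i+1) : ℚ) * ((i:ℚ)+1) = (Nat.choose k i : ℚ) * ((k:ℚ) - i) := by
      have := congrArg (Nat.cast (R := ℚ)) (Nat.choose_succ_right_eq k i)
      push_cast [Nat.cast_sub hik.le] at this
      linarith [this]
    have e2 : (Nat.choose (n-k) (i+1) : ℚ) * ((i:ℚ)+1)
        = (Nat.choose (n-k) i : ℚ) * ((n:ℚ) - k - i) := by
      have := congrArg (Nat.cast (R := ℚ)) (Nat.choose_succ_right_eq (n-k) i)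
      push_cast [Nat.cast_sub him.le, Nat.cast_sub (by omega : k ≤ n)] at this
      linarith [this]
    rw [hp, hq, hΩ, hΩ]
    push_cast
    rw [div_mul_eq_mul_div, div_mul_eq_mul_div]
    congr 1
    linear_combination (-((Nat.choose (n-k) (i+1):ℚ) * ((i:ℚ)+1))) * e1
      - ((Nat.choose k i:ℚ) * ((k:ℚ)-(i:ℚ))) * e2
  have step : ∀ i, 1 ≤ i → i ≤ d - 1 →
      q i * (h i - h (i-1)) = 1 + p i * (h (i+1) - h i) := by
    intro i h1 h2
    linear_combination hrec i h1 h2 + h i * hr i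
  have bd : q d * (h d - h (d-1)) = 1 := by
    linear_combination hbd + h d * hr d - h d * hpd0
  have key : ∀ t, ∀ i, 1 ≤ i → i + t = d →
      q i * Ω i * (h i - h (i-1)) = ∑ j ∈ Finset.Icc i d, Ω j := by
    intro t
    induction t with
    | zero =>
      intro i h1 h2
      have hi : i = d := by omega
      subst hi
      rw [Finset.Icc_self, Finset.sum_singleton]
      linear_combination Ω d * bd
    | succ t ih =>
      intro i h1 h2
      have hsplit : Finset.Icc i d = insert i (Finset.Icc (i+1) d) := by
        ext x; simp only [Finset.mem_Icc, Finset.mem_insert]; omega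
      rw [hsplit, Finset.sum_insert (by simp)]
      have ihh := ih (i+1) (by omega) (by omega)
      simp only [Nat.add_sub_cancel] at ihh
      have hs := step i h1 (by omega)
      have hpq' := hpq i (by omega)
      linear_combination Ω i * hs + ihh + (h (i+1) - h i) * hpq'
  intro m
  induction m with
  | zero => intro _; simp [h0]
  | succ m ih =>
    intro hm
    have ihm := ih (by omega)
    have hk' := key (d - (m+1)) (m+1) (by omega) (by omega)
    simp only [Nat.add_sub_cancel] at hk'
    have hqΩ : q (m+1) * Ω (m+1) ≠ 0 :=
      ne_of_gt (mul_pos (hqpos _ (by omega)) (hΩpos _ hm))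
    rw [Finset.sum_Icc_succ_top (by omega : 1 ≤ m + 1), ← ihm, ← hk']
    field_simp
    have e1 : q (m+1) * (q (m+1))⁻¹ = 1 := mul_inv_cancel₀ (ne_of_gt (hqpos _ (by omega)))
    have e2 : Ω (m+1) * (Ω (m+1))⁻¹ = 1 := mul_inv_cancel₀ (ne_of_gt (hΩpos _ (by omega)))
    linear_combination (-(h (m+1) - h m) * (Ω (m+1) * (Ω (m+1))⁻¹)) * e1 - (h (m+1) - h m) * e2
end

section
/- Under the first-step recurrence q_i δ_i = 1 + p_i δ_{i+1} for 1 ≤ i ≤ d_max - 1 with boundary condition q_{d_max} δ_{d_max} = 1, the increments satisfy δ_i = (1/(q_i |Ω_i|)) · Σ_{j=i}^{d_max} |Ω_j|. -/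
theorem increment_formula (n k : ℕ) (hk1 : 1 ≤ k) (hk2 : k ≤ n - 1)
    (δ : ℕ → ℚ) (p : ℕ → ℚ) (q : ℕ → ℚ) (Ω : ℕ → ℚ)
    (hp : ∀ d, p d = ((k : ℚ) - d) * ((n : ℚ) - k - d) / ((k : ℚ) * ((n : ℚ) - k)))
    (hq : ∀ d, q d = (d : ℚ) ^ 2 / ((k : ℚ) * ((n : ℚ) - k)))
    (hΩ : ∀ d, Ω d = (Nat.choose k d * Nat.choose (n - k) d : ℚ))
    (hrec : ∀ i, 1 ≤ i → i ≤ min k (n - k) - 1 → q i * δ i = 1 + p i * δ (i + 1))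
    (hbd : q (min k (n - k)) * δ (min k (n - k)) = 1) :
    ∀ i, 1 ≤ i → i ≤ min k (n - k) →
      δ i = (1 / (q i * Ω i)) * ∑ j ∈ Finset.Icc i (min k (n - k)), Ω j := by
  set D := min k (n - k) with hD
  have hkn : k + 1 ≤ n := by omega
  have hnk1 : 1 ≤ n - k := by omega
  have hKne : ((k : ℚ)) ≠ 0 := by positivity
  have hNK : ((n : ℚ)) - k = ((n - k : ℕ) : ℚ) := by
    push_cast [Nat.cast_sub (by omega : k ≤ n)]; ring
  have hNKne : ((n : ℚ)) - k ≠ 0 := by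
    rw [hNK]; exact_mod_cast (by omega : (n - k : ℕ) ≠ 0)
  have hqne : ∀ i, 1 ≤ i → q i ≠ 0 := by
    intro i hi
    rw [hq]
    apply div_ne_zero
    · have : (i : ℚ) ≠ 0 := by exact_mod_cast (by omega : i ≠ 0)
      positivity
    · exact mul_ne_zero hKne hNKne
  have hΩne : ∀ i, i ≤ D → Ω i ≠ 0 := by
    intro i hi
    rw [hΩ]
    have h1 : Nat.choose k i ≠ 0 := ne_of_gt (Nat.choose_pos (le_trans hi (min_le_left _ _)))
    have h2 : Nat.choose (n - k) i ≠ 0 := ne_of_gt (Nat.choose_pos (le_trans hi (min_le_right _ _)))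
    exact_mod_cast Nat.mul_ne_zero h1 h2
  -- key identity: for i < D, p i * Ω i = q (i+1) * Ω (i+1)
  have hkey : ∀ i, i + 1 ≤ D → p i * Ω i = q (i + 1) * Ω (i + 1) := by
    intro i hiD
    have hik : i + 1 ≤ k := le_trans hiD (min_le_left _ _)
    have hink : i + 1 ≤ n - k := le_trans hiD (min_le_right _ _)
    rw [hp, hq, hΩ, hΩ]
    have hKi : (k : ℚ) - i = ((k - i : ℕ) : ℚ) := by
      push_cast [Nat.cast_sub (by omega : i ≤ k)]; ring
    have hNKi : (n : ℚ) - k - i = ((n - k - i : ℕ) : ℚ) := by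
      rw [hNK]; push_cast [Nat.cast_sub (by omega : i ≤ n - k)]; ring
    rw [hKi, hNKi]
    rw [div_mul_eq_mul_div, div_mul_eq_mul_div]
    congr 1
    have e1 : Nat.choose k (i + 1) * (i + 1) = Nat.choose k i * (k - i) :=
      Nat.choose_succ_right_eq k i
    have e2 : Nat.choose (n - k) (i + 1) * (i + 1) = Nat.choose (n - k) i * (n - k - i) :=
      Nat.choose_succ_right_eq (n - k) i
    have := congrArg (fun x : ℕ => (x : ℚ)) (congrArg₂ (· * ·) e1 e2)
    push_cast at this ⊢
    nlinarith [this]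
  -- main downward induction
  have main : ∀ m i, 1 ≤ i → i ≤ D → D - i ≤ m →
      δ i = (1 / (q i * Ω i)) * ∑ j ∈ Finset.Icc i D, Ω j := by
    intro m
    induction m with
    | zero =>
      intro i hi1 hiD hm
      have : i = D := by omega
      subst this
      rw [Finset.Icc_self, Finset.sum_singleton]
      have hq0 := hqne D hi1
      have hΩ0 := hΩne D le_rfl
      field_simp
      linear_combination hbd
    | succ m ih =>
      intro i hi1 hiD hm
      by_cases hcase : i = D
      · subst hcase
        rw [Finset.Icc_self, Finset.sum_singleton]
        have hq0 := hqne D hi1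
        have hΩ0 := hΩne D le_rfl
        field_simp
        linear_combination hbd
      · have hiD' : i + 1 ≤ D := by omega
        have hrec_i := hrec i hi1 (by omega)
        have ih' := ih (i + 1) (by omega) hiD' (by omega)
        have hkey' := hkey i hiD'
        have hq0 := hqne i hi1
        have hΩ0 := hΩne i (by omega)
        have hΩ1 := hΩne (i + 1) hiD'
        have hq1 := hqne (i + 1) (by omega)
        have hp0 : p i ≠ 0 := by
          intro h
          rw [h, zero_mul] at hkey'
          exact (mul_ne_zero hq1 hΩ1) hkey'.symm
        -- split sum
        have hsum : ∑ j ∈ Finset.Icc i D, Ω j = Ω i + ∑ j ∈ Finset.Icc (i + 1) D, Ω j := by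
          rw [Finset.Icc_add_one_left_eq_Ioc, ← Finset.Ioc_insert_left (by omega : i ≤ D),
            Finset.sum_insert (by simp)]
        rw [ih'] at hrec_i
        rw [hsum]
        set S := ∑ j ∈ Finset.Icc (i + 1) D, Ω j with hS
        rw [← hkey'] at hrec_i
        -- hrec_i : q i * δ i = 1 + p i * (1 / (p i * Ω i) * S)
        have h2 : q i * δ i = 1 + S / Ω i := by
          rw [hrec_i]
          field_simp
        field_simp at h2 ⊢
        linear_combination h2
  intro i hi1 hiD
  exact main (D - i) i hi1 hiD le_rfl
end
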